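/- Let m ≥ 1, ψ ∈ L²(ℝ^m, ℂ), f ∈ L²(ℝ^m, ℂ), T ⊆ ℝ^m and Ω ⊆ (0,∞)×ℝ^m measurable, and ε_T, ε_Ω ≥ 0. Assume the Parseval identity ‖T_ψ(g)‖_{L²(μ)} = A_ψ · ‖g‖_{L²(ℝ^m)} holds for every g ∈ L²(ℝ^m, ℂ), where A_ψ > 0 is a constant. If f is ε_T-concentrated on T in L²(ℝ^m) and T_ψ(f) is ε_Ω-concentrated on Ω in L²(μ), then ‖T_ψ(f) − 1_Ω · T_ψ(1_T·f)‖_{L²(μ)} ≤ ε_Ω · ‖T_ψ(f)‖_{L²(μ)} + A_ψ · ε_T · ‖f‖_{L²(ℝ^m)}. -/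

import Mathlib

/-!
On `a > 0`, which is `μ`-almost everywhere, the wavelet transform is linear in `f`, so
`T_ψ f = T_ψ (1_T f) + T_ψ (1_{Tᶜ} f)` and hence
`T_ψ f - 1_Ω T_ψ (1_T f) = 1_{Ωᶜ} T_ψ f + 1_Ω T_ψ (1_{Tᶜ} f)` almost everywhere. The first term
is controlled by the concentration of `T_ψ f` on `Ω`, the second by Parseval applied to
`1_{Tᶜ} f` together with the concentration of `f` on `T`.
-/

open MeasureTheory Set
open scoped ENNReal

/-- The continuous wavelet transform of `f` with respect to the wavelet `ψ`:
`T_ψ f (a, b) = a^(-m/2) ∫ f x * conj (ψ ((x - b) / a)) dx`. -/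
noncomputable def waveletTransform (m : ℕ) (ψ f : EuclideanSpace ℝ (Fin m) → ℂ)
    (p : ℝ × EuclideanSpace ℝ (Fin m)) : ℂ :=
  ((p.1 ^ (-(m : ℝ) / 2) : ℝ) : ℂ) *
    ∫ x, f x * (starRingEnd ℂ) (ψ (p.1⁻¹ • (x - p.2)))

/-- The measure `dμ(a,b) = a^{-(m+1)} da db` on `(0,∞) × ℝ^m`, realized as a measure on
`ℝ × ℝ^m` supported on `(0,∞) × ℝ^m`. -/
noncomputable def waveletMeasure (m : ℕ) : Measure (ℝ × EuclideanSpace ℝ (Fin m)) :=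
  (((volume : Measure ℝ).restrict (Set.Ioi 0)).withDensity
    (fun a => ENNReal.ofReal (a ^ (-((m : ℝ) + 1))))).prod volume

/-- `φ_{Ω,T}(ψ) = ∫_Ω (∫_{(T-b)/a} |ψ t|² dt) dμ(a,b)`. -/
noncomputable def phiOmegaT (m : ℕ) (ψ : EuclideanSpace ℝ (Fin m) → ℂ)
    (Ω : Set (ℝ × EuclideanSpace ℝ (Fin m))) (T : Set (EuclideanSpace ℝ (Fin m))) : ℝ≥0∞ :=
  ∫⁻ p in Ω, (∫⁻ t in (fun x => p.1⁻¹ • (x - p.2)) '' T, (‖ψ t‖₊ : ℝ≥0∞) ^ 2)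
    ∂(waveletMeasure m)

section AffineChangeOfVariables

variable {E F : Type*} [NormedAddCommGroup E] [NormedSpace ℝ E] [MeasurableSpace E]
  [BorelSpace E] [FiniteDimensional ℝ E] (μ : Measure E) [μ.IsAddHaarMeasure]

theorem map_addHaar_smul_sub {a : ℝ} (ha : a ≠ 0) (b : E) :
    μ.map (fun x => a • (x - b)) = ENNReal.ofReal |(a ^ Module.finrank ℝ E)⁻¹| • μ := by
  have hcomp : (fun x => a • (x - b)) = (a • ·) ∘ (· - b) := rfl
  rw [hcomp, ← Measure.map_map (measurable_const_smul a) (measurable_sub_const b),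
    (measurePreserving_sub_right μ b).map_eq, Measure.map_addHaar_smul μ ha]

theorem quasiMeasurePreserving_smul_sub {a : ℝ} (ha : a ≠ 0) (b : E) :
    Measure.QuasiMeasurePreserving (fun x => a • (x - b)) μ μ :=
  (Measure.quasiMeasurePreserving_smul μ ha).comp
    (measurePreserving_sub_right μ b).quasiMeasurePreserving

variable {μ} [NormedAddCommGroup F]

theorem MeasureTheory.MemLp.comp_smul_sub {p : ℝ≥0∞} {g : E → F} (hg : MemLp g p μ) {a : ℝ}
    (ha : a ≠ 0) (b : E) : MemLp (fun x => g (a • (x - b))) p μ := by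
  have hmap : MemLp g p (μ.map fun x => a • (x - b)) := by
    rw [map_addHaar_smul_sub μ ha]
    exact hg.smul_measure ENNReal.ofReal_ne_top
  exact hmap.comp_of_map (by fun_prop)

end AffineChangeOfVariables

theorem ae_waveletMeasure_fst_pos (m : ℕ) : ∀ᵐ p ∂waveletMeasure m, 0 < p.1 :=
  Measure.quasiMeasurePreserving_fst.ae <|
    withDensity_absolutelyContinuous _ _ (ae_restrict_mem measurableSet_Ioi)

section WaveletTransform

variable {m : ℕ} {ψ f g : EuclideanSpace ℝ (Fin m) → ℂ}

theorem integrable_mul_conj_comp_smul_sub (hf : MemLp f 2 volume) (hψ : MemLp ψ 2 volume)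
    {a : ℝ} (ha : a ≠ 0) (b : EuclideanSpace ℝ (Fin m)) :
    Integrable (fun x => f x * (starRingEnd ℂ) (ψ (a⁻¹ • (x - b)))) :=
  hf.integrable_mul (hψ.comp_smul_sub (inv_ne_zero ha) b).star

theorem waveletTransform_add (hψ : MemLp ψ 2 volume) (hf : MemLp f 2 volume)
    (hg : MemLp g 2 volume) {p : ℝ × EuclideanSpace ℝ (Fin m)} (hp : p.1 ≠ 0) :
    waveletTransform m ψ (f + g) p = waveletTransform m ψ f p + waveletTransform m ψ g p := by
  simp only [waveletTransform, Pi.add_apply, add_mul]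
  rw [integral_add (integrable_mul_conj_comp_smul_sub hf hψ hp p.2)
    (integrable_mul_conj_comp_smul_sub hg hψ hp p.2), mul_add]

theorem MeasureTheory.StronglyMeasurable.waveletTransform (hψ : StronglyMeasurable ψ)
    (hf : StronglyMeasurable f) : StronglyMeasurable (waveletTransform m ψ f) := by
  have hkernel : StronglyMeasurable fun q : (ℝ × EuclideanSpace ℝ (Fin m)) × _ =>
      f q.2 * (starRingEnd ℂ) (ψ (q.1.1⁻¹ • (q.2 - q.1.2))) :=
    (hf.comp_measurable measurable_snd).mul <|
      Complex.continuous_conj.comp_stronglyMeasurable (hψ.comp_measurable (by fun_prop))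
  exact (Measurable.stronglyMeasurable (by fun_prop)).mul hkernel.integral_prod_right'

theorem waveletTransform_congr_ae {ψ' f' : EuclideanSpace ℝ (Fin m) → ℂ}
    (hψ : ψ =ᵐ[volume] ψ') (hf : f =ᵐ[volume] f') :
    waveletTransform m ψ f =ᵐ[waveletMeasure m] waveletTransform m ψ' f' := by
  filter_upwards [ae_waveletMeasure_fst_pos m] with p hp
  have hψp : (fun x => ψ (p.1⁻¹ • (x - p.2))) =ᵐ[volume] fun x => ψ' (p.1⁻¹ • (x - p.2)) :=
    (quasiMeasurePreserving_smul_sub volume (inv_ne_zero hp.ne') p.2).ae_eq_comp hψ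
  unfold waveletTransform
  congr 1
  refine integral_congr_ae ?_
  filter_upwards [hf, hψp] with x hfx hψx
  rw [hfx, hψx]

theorem MeasureTheory.AEStronglyMeasurable.waveletTransform (hψ : AEStronglyMeasurable ψ volume)
    (hf : AEStronglyMeasurable f volume) :
    AEStronglyMeasurable (waveletTransform m ψ f) (waveletMeasure m) :=
  ⟨_, hψ.stronglyMeasurable_mk.waveletTransform hf.stronglyMeasurable_mk,
    waveletTransform_congr_ae hψ.ae_eq_mk hf.ae_eq_mk⟩

end WaveletTransform

theorem eLpNorm_waveletTransform_sub_localized_le_general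
    (m : ℕ)
    (ψ f : EuclideanSpace ℝ (Fin m) → ℂ)
    (hψ : MemLp ψ 2 (volume : Measure (EuclideanSpace ℝ (Fin m))))
    (hf : MemLp f 2 (volume : Measure (EuclideanSpace ℝ (Fin m))))
    (T : Set (EuclideanSpace ℝ (Fin m))) (hT : MeasurableSet T)
    (Ω : Set (ℝ × EuclideanSpace ℝ (Fin m))) (hΩ : MeasurableSet Ω)
    (εT εΩ : ℝ)
    (Aψ : ℝ)
    (hParseval : ∀ g : EuclideanSpace ℝ (Fin m) → ℂ,
      MemLp g 2 (volume : Measure (EuclideanSpace ℝ (Fin m))) →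
        eLpNorm (waveletTransform m ψ g) 2 (waveletMeasure m) =
          ENNReal.ofReal Aψ * eLpNorm g 2 (volume : Measure (EuclideanSpace ℝ (Fin m))))
    (hconcT : eLpNorm (Tᶜ.indicator f) 2 (volume : Measure (EuclideanSpace ℝ (Fin m)))
      ≤ ENNReal.ofReal εT * eLpNorm f 2 (volume : Measure (EuclideanSpace ℝ (Fin m))))
    (hconcΩ : eLpNorm (Ωᶜ.indicator (waveletTransform m ψ f)) 2 (waveletMeasure m)
      ≤ ENNReal.ofReal εΩ * eLpNorm (waveletTransform m ψ f) 2 (waveletMeasure m)) :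
    eLpNorm (fun p => waveletTransform m ψ f p -
        Ω.indicator (waveletTransform m ψ (T.indicator f)) p) 2 (waveletMeasure m) ≤
      ENNReal.ofReal εΩ * eLpNorm (waveletTransform m ψ f) 2 (waveletMeasure m) +
        ENNReal.ofReal Aψ * ENNReal.ofReal εT *
          eLpNorm f 2 (volume : Measure (EuclideanSpace ℝ (Fin m))) := by
  set W := waveletTransform m ψ
  have hfTc : MemLp (Tᶜ.indicator f) 2 volume := hf.indicator hT.compl
  have hsplit : (fun p => W f p - Ω.indicator (W (T.indicator f)) p)
      =ᵐ[waveletMeasure m] Ωᶜ.indicator (W f) + Ω.indicator (W (Tᶜ.indicator f)) := by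
    filter_upwards [ae_waveletMeasure_fst_pos m] with p hp
    have hlin : W f p = W (T.indicator f) p + W (Tᶜ.indicator f) p := by
      rw [← waveletTransform_add hψ (hf.indicator hT) hfTc hp.ne', indicator_self_add_compl]
    by_cases hpΩ : p ∈ Ω <;> simp [hpΩ, hlin]
  calc eLpNorm (fun p => W f p - Ω.indicator (W (T.indicator f)) p) 2 (waveletMeasure m)
      = eLpNorm (Ωᶜ.indicator (W f) + Ω.indicator (W (Tᶜ.indicator f))) 2 (waveletMeasure m) :=
        eLpNorm_congr_ae hsplit
    _ ≤ eLpNorm (Ωᶜ.indicator (W f)) 2 (waveletMeasure m) +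
          eLpNorm (W (Tᶜ.indicator f)) 2 (waveletMeasure m) := by
        refine (eLpNorm_add_le ?_ ?_ one_le_two).trans (by gcongr; exact eLpNorm_indicator_le _)
        · exact (hψ.1.waveletTransform hf.1).indicator hΩ.compl
        · exact (hψ.1.waveletTransform hfTc.1).indicator hΩ
    _ ≤ _ := by
        rw [hParseval _ hfTc, mul_assoc]
        gcongr

/-- Triangle-inequality step in Donoho–Stark for the wavelet transform:
`‖T_ψ f − 1_Ω · T_ψ(1_T·f)‖_{L²(μ)} ≤ ε_Ω ‖T_ψ f‖_{L²(μ)} + A_ψ ε_T ‖f‖_{L²}`. -/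
theorem eLpNorm_waveletTransform_sub_localized_le
    (m : ℕ) (hm : 1 ≤ m)
    (ψ f : EuclideanSpace ℝ (Fin m) → ℂ)
    (hψ : MemLp ψ 2 (volume : Measure (EuclideanSpace ℝ (Fin m))))
    (hf : MemLp f 2 (volume : Measure (EuclideanSpace ℝ (Fin m))))
    (T : Set (EuclideanSpace ℝ (Fin m))) (hT : MeasurableSet T)
    (Ω : Set (ℝ × EuclideanSpace ℝ (Fin m))) (hΩ : MeasurableSet Ω)
    (hΩ_sub : Ω ⊆ Set.Ioi (0 : ℝ) ×ˢ Set.univ)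
    (εT εΩ : ℝ) (hεT : 0 ≤ εT) (hεΩ : 0 ≤ εΩ)
    (Aψ : ℝ) (hAψ : 0 < Aψ)
    (hParseval : ∀ g : EuclideanSpace ℝ (Fin m) → ℂ,
      MemLp g 2 (volume : Measure (EuclideanSpace ℝ (Fin m))) →
        eLpNorm (waveletTransform m ψ g) 2 (waveletMeasure m) =
          ENNReal.ofReal Aψ * eLpNorm g 2 (volume : Measure (EuclideanSpace ℝ (Fin m))))
    (hconcT : eLpNorm (Tᶜ.indicator f) 2 (volume : Measure (EuclideanSpace ℝ (Fin m)))
      ≤ ENNReal.ofReal εT * eLpNorm f 2 (volume : Measure (EuclideanSpace ℝ (Fin m))))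
    (hconcΩ : eLpNorm (Ωᶜ.indicator (waveletTransform m ψ f)) 2 (waveletMeasure m)
      ≤ ENNReal.ofReal εΩ * eLpNorm (waveletTransform m ψ f) 2 (waveletMeasure m)) :
    eLpNorm (fun p => waveletTransform m ψ f p -
        Ω.indicator (waveletTransform m ψ (T.indicator f)) p) 2 (waveletMeasure m) ≤
      ENNReal.ofReal εΩ * eLpNorm (waveletTransform m ψ f) 2 (waveletMeasure m) +
        ENNReal.ofReal Aψ * ENNReal.ofReal εT *
          eLpNorm f 2 (volume : Measure (EuclideanSpace ℝ (Fin m))) :=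
  eLpNorm_waveletTransform_sub_localized_le_general m ψ f hψ hf T hT Ω hΩ εT εΩ Aψ hParseval hconcT
    hconcΩ
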